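/- For the cycle C_n with n ≥ 3, the zero blocking number satisfies B(C_n) = ⌈n/2⌉. -/

import Mathlib

open Set

/-- One step of the zero forcing process on the set `W` of white vertices:
a white vertex is removed (colored black) if it is the unique white neighbor
of some black vertex. -/
def zbStep {V : Type*} (G : SimpleGraph V) (W : Set V) : Set V :=
  {w ∈ W | ¬ ∃ b ∉ W, G.Adj b w ∧ ∀ w' ∈ W, G.Adj b w' → w' = w}

/-- `W` is a zero blocking set: the zero forcing process started with white set `W`
never colors all of `W` black. -/
def IsZeroBlocking {V : Type*} (G : SimpleGraph V) (W : Set V) : Prop :=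
  ∀ n : ℕ, ((zbStep G)^[n] W).Nonempty

/-- The zero blocking number `B(G)`. -/
noncomputable def zbNum {V : Type*} (G : SimpleGraph V) : ℕ∞ :=
  ⨅ (W : Set V) (_ : IsZeroBlocking G W), W.encard

lemma zbStep_subset {V : Type*} (G : SimpleGraph V) (W : Set V) : zbStep G W ⊆ W :=
  fun _ hx => hx.1

lemma exists_fixed {V : Type*} [Fintype V] (G : SimpleGraph V) (W : Set V)
    (hW : IsZeroBlocking G W) : ∃ F, F ⊆ W ∧ zbStep G F = F ∧ F.Nonempty := by
  have hiterW : ∀ k, (zbStep G)^[k] W ⊆ W := by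
    intro k
    induction k with
    | zero => exact fun x hx => hx
    | succ k ih =>
      rw [Function.iterate_succ_apply']
      exact (zbStep_subset G _).trans ih
  have key : ∃ k, (zbStep G)^[k+1] W = (zbStep G)^[k] W := by
    by_contra h
    push_neg at h
    have hdec : ∀ k, ((zbStep G)^[k+1] W).ncard < ((zbStep G)^[k] W).ncard := by
      intro k
      refine Set.ncard_lt_ncard ?_ (Set.toFinite _)
      refine ssubset_of_subset_of_ne ?_ (h k)
      rw [Function.iterate_succ_apply']
      exact zbStep_subset G _
    have hle : ∀ k, ((zbStep G)^[k] W).ncard + k ≤ W.ncard := by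
      intro k
      induction k with
      | zero => simp
      | succ k ih => have := hdec k; omega
    have h1 : 0 < ((zbStep G)^[W.ncard + 1] W).ncard :=
      (Set.ncard_pos (Set.toFinite _)).mpr (hW _)
    have := hle (W.ncard + 1)
    omega
  obtain ⟨k, hk⟩ := key
  refine ⟨(zbStep G)^[k] W, hiterW k, ?_, hW k⟩
  rw [← Function.iterate_succ_apply' (zbStep G) k W]
  exact hk

lemma card_even_range (n : ℕ) :
    ((Finset.range n).filter (fun k => Even k)).card = (n + 1) / 2 := by
  induction n with
  | zero => simp
  | succ n ih =>
    rw [Finset.range_add_one, Finset.filter_insert]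
    rcases Nat.even_or_odd n with he | ho
    · rw [if_pos he, Finset.card_insert_of_notMem (by simp), ih]
      obtain ⟨m, rfl⟩ := he; omega
    · rw [if_neg (Nat.not_even_iff_odd.mpr ho), ih]
      obtain ⟨m, rfl⟩ := ho; omega

section Cycle

variable {m : ℕ}

open scoped Fin.NatCast Fin.CommRing

lemma cyc_adj_iff {b w : Fin (m + 3)} :
    (SimpleGraph.cycleGraph (m + 3)).Adj b w ↔ w = b - 1 ∨ w = b + 1 := by
  rw [SimpleGraph.cycleGraph_adj (n := m + 1)]
  constructor
  · rintro (h | h)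
    · left; rw [← h]; ring
    · right; rw [← h]; ring
  · rintro (rfl | rfl)
    · left; ring
    · right; ring

lemma fixed_step (F : Set (Fin (m + 3))) (hF : zbStep (SimpleGraph.cycleGraph (m + 3)) F = F)
    (x : Fin (m + 3)) (hx : x ∉ F) (hx1 : x + 1 ∉ F) : x + 2 ∉ F := by
  intro hx2
  have hmem : x + 2 ∈ zbStep (SimpleGraph.cycleGraph (m + 3)) F := by rw [hF]; exact hx2
  apply hmem.2
  refine ⟨x + 1, hx1, ?_, ?_⟩
  · rw [cyc_adj_iff]; right; ring
  · intro w' hw' hadj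
    rw [cyc_adj_iff] at hadj
    rcases hadj with rfl | rfl
    · exfalso; apply hx; rwa [show x + 1 - 1 = x by ring] at hw'
    · ring

lemma fixed_no_two (F : Set (Fin (m + 3))) (hF : zbStep (SimpleGraph.cycleGraph (m + 3)) F = F)
    (hne : F.Nonempty) (x : Fin (m + 3)) (hx : x ∉ F) : x + 1 ∈ F := by
  by_contra hx1
  have hall : ∀ k : ℕ, x + (k : Fin (m + 3)) ∉ F ∧ x + (k : Fin (m + 3)) + 1 ∉ F := by
    intro k
    induction k with
    | zero => simpa using ⟨hx, hx1⟩
    | succ k ih =>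
      push_cast
      constructor
      · have := ih.2; rwa [show x + ((k : Fin (m+3)) + 1) = x + (k : Fin (m+3)) + 1 by ring]
      · have h2 := fixed_step F hF (x + (k : Fin (m+3))) ih.1 ih.2
        rwa [show x + (k : Fin (m+3)) + 2 = x + ((k : Fin (m+3)) + 1) + 1 by ring] at h2
  obtain ⟨v, hv⟩ := hne
  have := (hall ((v - x).val)).1
  rw [Fin.cast_val_eq_self, add_sub_cancel] at this
  exact this hv

lemma fixed_card (F : Set (Fin (m + 3))) (hF : zbStep (SimpleGraph.cycleGraph (m + 3)) F = F)
    (hne : F.Nonempty) : (m + 3 + 1) / 2 ≤ F.ncard := by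
  have hsub : (fun x => x + 1) '' Fᶜ ⊆ F := by
    rintro _ ⟨b, hb, rfl⟩
    exact fixed_no_two F hF hne b hb
  have h1 : Fᶜ.ncard ≤ F.ncard := by
    calc Fᶜ.ncard = ((fun x => x + 1) '' Fᶜ).ncard :=
          (Set.ncard_image_of_injective _ (add_left_injective 1)).symm
      _ ≤ F.ncard := Set.ncard_le_ncard hsub (Set.toFinite _)
  have h2 : F.ncard + Fᶜ.ncard = m + 3 := by
    rw [Set.ncard_add_ncard_compl]
    simp
  omega

lemma even_fixed : zbStep (SimpleGraph.cycleGraph (m + 3)) {i : Fin (m + 3) | Even i.val}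
    = {i : Fin (m + 3) | Even i.val} := by
  ext w
  simp only [zbStep, Set.mem_setOf_eq, Set.mem_sep_iff, and_iff_left_iff_imp]
  intro hw
  rintro ⟨b, hb, hadj, huniq⟩
  have hodd : ¬ Even b.val := hb
  obtain ⟨j, hj⟩ := Nat.not_even_iff_odd.mp hodd
  have hbv : b.val < m + 3 := b.isLt
  have hv1 : (b - 1).val = b.val - 1 := by
    rw [Fin.sub_def]
    simp only [Fin.val_one]
    have h1 : m + 3 - 1 + b.val = (m + 3) + (b.val - 1) := by omega
    rw [h1, Nat.add_mod_left, Nat.mod_eq_of_lt (by omega)]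
  have hv2 : (b + 1).val = (b.val + 1) % (m + 3) := by
    rw [Fin.add_def]; simp
  have he1 : Even (b - 1).val := by rw [hv1]; exact ⟨j, by omega⟩
  have he2 : Even (b + 1).val := by
    rw [hv2]
    rcases Nat.lt_or_ge (b.val + 1) (m + 3) with h | h
    · rw [Nat.mod_eq_of_lt h]; exact ⟨j + 1, by omega⟩
    · have h1 : b.val + 1 = m + 3 := by omega
      rw [h1, Nat.mod_self]; exact Even.zero
  have hne : b - 1 ≠ b + 1 := by
    intro h
    have hvv := congrArg Fin.val h
    rw [hv1, hv2] at hvv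
    rcases Nat.lt_or_ge (b.val + 1) (m + 3) with h' | h'
    · rw [Nat.mod_eq_of_lt h'] at hvv; omega
    · have h1 : b.val + 1 = m + 3 := by omega
      rw [h1, Nat.mod_self] at hvv; omega
  rw [cyc_adj_iff] at hadj
  rcases hadj with rfl | rfl
  · exact hne (huniq (b + 1) he2 (by rw [cyc_adj_iff]; right; rfl)).symm
  · exact hne (huniq (b - 1) he1 (by rw [cyc_adj_iff]; left; rfl))

lemma even_ncard : ({i : Fin (m + 3) | Even i.val}).ncard = (m + 3 + 1) / 2 := by
  classical
  rw [Set.ncard_eq_toFinset_card']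
  rw [← card_even_range (m + 3)]
  refine Finset.card_bij (fun i _ => i.val) ?_ ?_ ?_
  · intro a ha
    simp only [Set.mem_toFinset, Set.mem_setOf_eq] at ha
    simp [a.isLt, ha]
  · intro a _ b _ h
    exact Fin.ext h
  · intro b hb
    simp only [Finset.mem_filter, Finset.mem_range] at hb
    exact ⟨⟨b, hb.1⟩, by simp [hb.2], rfl⟩

end Cycle

theorem zbNum_cycleGraph (n : ℕ) (hn : 3 ≤ n) :
    zbNum (SimpleGraph.cycleGraph n) = (((n + 1) / 2 : ℕ) : ℕ∞) := by
  obtain ⟨m, rfl⟩ : ∃ m, n = m + 3 := ⟨n - 3, by omega⟩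
  apply le_antisymm
  · -- upper bound via the even set
    have hblock : IsZeroBlocking (SimpleGraph.cycleGraph (m + 3))
        {i : Fin (m + 3) | Even i.val} := by
      intro k
      rw [Function.iterate_fixed even_fixed]
      exact ⟨0, by simp⟩
    calc zbNum (SimpleGraph.cycleGraph (m + 3))
        ≤ ({i : Fin (m + 3) | Even i.val}).encard := by
          exact iInf₂_le _ hblock
      _ = (((m + 3 + 1) / 2 : ℕ) : ℕ∞) := by
          rw [← Set.Finite.cast_ncard_eq (Set.toFinite _), even_ncard]
  · -- lower bound
    refine le_iInf₂ fun W hW => ?_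
    obtain ⟨F, hFW, hfix, hne⟩ := exists_fixed _ W hW
    have h1 : (m + 3 + 1) / 2 ≤ F.ncard := fixed_card F hfix hne
    calc (((m + 3 + 1) / 2 : ℕ) : ℕ∞) ≤ (F.ncard : ℕ∞) := by exact_mod_cast h1
      _ = F.encard := Set.Finite.cast_ncard_eq (Set.toFinite _)
      _ ≤ W.encard := Set.encard_le_encard hFW
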